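/- Let $k$ be a field of prime characteristic $p$, and let $H_m$ be the $T$-space of $k_0\langle X\rangle$ generated by $x_1^p\cdots x_m^p$. Then for every $m \geq 1$, every $u \in H_m$, and every $v \in k_0\langle X\rangle$, the commutator $[u,v]$ belongs to $H_m$. -/

import Mathlib

open scoped BigOperators

/-- The free non-unital associative algebra over `k` on countably many variables,
realized as the semigroup algebra of the free semigroup on `ℕ`. -/
abbrev FA (k : Type*) [Field k] := MonoidAlgebra k (FreeSemigroup ℕ)

/-- The generator (variable) `x_i`. -/
noncomputable def Xg (k : Type*) [Field k] (i : ℕ) : FA k :=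
  MonoidAlgebra.single (FreeSemigroup.of i) 1

/-- Product of a (nonempty) list in a non-unital semiring; `0` on the empty list. -/
def lprod {A : Type*} [NonUnitalSemiring A] : List A → A
  | [] => 0
  | [a] => a
  | a :: b :: l => a * lprod (b :: l)

/-- `n`-th power in a non-unital semiring (zero for `n = 0`). -/
def npow' {A : Type*} [NonUnitalSemiring A] (a : A) (n : ℕ) : A :=
  lprod (List.replicate n a)

/-- The full multilinear symmetrization `S^{(d)}(y_1,…,y_d) = ∑_{σ ∈ Σ_d} y_{σ(1)} ⋯ y_{σ(d)}`. -/
def Ssym {A : Type*} [NonUnitalSemiring A] (d : ℕ) (y : Fin d → A) : A :=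
  ∑ σ : Equiv.Perm (Fin d), lprod (List.ofFn (fun i => y (σ i)))

/-- A T-space: a subspace closed under all substitution endomorphisms
(non-unital algebra endomorphisms). -/
def IsTSpace (k : Type*) [Field k] (V : Submodule k (FA k)) : Prop :=
  ∀ (φ : FA k →ₙₐ[k] FA k), ∀ v ∈ V, φ v ∈ V

/-- The T-space generated by a set `S`: the span of all substitution instances
of elements of `S`. -/
noncomputable def TSpan (k : Type*) [Field k] (S : Set (FA k)) : Submodule k (FA k) :=
  Submodule.span k {a | ∃ (φ : FA k →ₙₐ[k] FA k) (s : FA k), s ∈ S ∧ a = φ s}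

/-- The set of products `u * v` with `u ∈ U`, `v ∈ V`. -/
def mulSet {k : Type*} [Field k] (U V : Submodule k (FA k)) : Set (FA k) :=
  {a | ∃ u ∈ U, ∃ v ∈ V, a = u * v}

/-- The T-spaces `S_n^{(d)}`: `S_1^{(d)}` is generated by `S^{(d)}(x_1,…,x_d)` and
`S_{n+1}^{(d)} = (S_n^{(d)} S_1^{(d)})^S`. -/
noncomputable def Sn (k : Type*) [Field k] (d : ℕ) : ℕ → Submodule k (FA k)
  | 0 => ⊥
  | 1 => TSpan k {Ssym d (fun i => Xg k i)}
  | (n+2) => TSpan k (mulSet (Sn k d (n+1)) (Sn k d 1))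

/-- The T-spaces `H_n`: `H_1` is generated by `x_1^p` and `H_{n+1} = (H_n H_1)^S`. -/
noncomputable def Hn (k : Type*) [Field k] (p : ℕ) : ℕ → Submodule k (FA k)
  | 0 => ⊥
  | 1 => TSpan k {npow' (Xg k 0) p}
  | (n+2) => TSpan k (mulSet (Hn k p (n+1)) (Hn k p 1))

/-- The word `x_1^p x_2^p ⋯ x_n^p`. -/
noncomputable def hword (k : Type*) [Field k] (p n : ℕ) : FA k :=
  lprod ((List.range n).map (fun t => npow' (Xg k t) p))

/-!
For `m = 1` it suffices, by linearity and substitution, to treat `u = a ^ p`. With `c = [a, v]`,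
the coefficient of `t` in `(a + t c) ^ p` is `[a ^ p, v]`, while the constant and leading
coefficients are the `p`-th powers `a ^ p` and `c ^ p`. Summing `t ^ (p - 2) (a + t c) ^ p` over
`t ∈ 𝔽_pˣ` keeps only the coefficients of `t ^ j` with `p - 1 ∣ p - 2 + j`; apart from the
extreme ones `j = 0, p` this is `j = 1` alone. Hence `[a ^ p, v]` is a combination of `p`-th
powers, so it lies in `H_1`.
These computations take place in the unitization, where `npow'` is an honest power.
The induction step is the Leibniz rule `[x y, v] = [x, v] y + x [y, v]`.
-/

open Finset

section ListProduct
variable {A : Type*} [NonUnitalSemiring A]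

theorem lprod_cons (a : A) {l : List A} (hl : l ≠ []) : lprod (a :: l) = a * lprod l := by
  cases l with
  | nil => contradiction
  | cons b l => rfl

theorem map_lprod {B F : Type*} [NonUnitalSemiring B] [FunLike F A B] [MulHomClass F A B]
    [ZeroHomClass F A B] (f : F) (l : List A) : f (lprod l) = lprod (l.map f) := by
  induction l with
  | nil => exact map_zero f
  | cons a l ih =>
    rcases eq_or_ne l [] with rfl | hl
    · rfl
    · rw [lprod_cons a hl, map_mul, ih, List.map_cons, lprod_cons _ (by simpa using hl)]

theorem map_npow' {B F : Type*} [NonUnitalSemiring B] [FunLike F A B] [MulHomClass F A B]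
    [ZeroHomClass F A B] (f : F) (a : A) (n : ℕ) : f (npow' a n) = npow' (f a) n := by
  rw [npow', map_lprod, List.map_replicate, npow']

theorem map_lprod_eq_prod {M F : Type*} [Monoid M] [FunLike F A M] [MulHomClass F A M] (f : F)
    {l : List A} (hl : l ≠ []) : f (lprod l) = (l.map f).prod := by
  induction l with
  | nil => contradiction
  | cons a l ih =>
    rcases eq_or_ne l [] with rfl | hl'
    · simp [lprod]
    · rw [lprod_cons a hl', map_mul, ih hl', List.map_cons, List.prod_cons]

theorem map_npow'_eq_pow {M F : Type*} [Monoid M] [FunLike F A M] [MulHomClass F A M] (f : F)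
    (a : A) {n : ℕ} (hn : n ≠ 0) : f (npow' a n) = f a ^ n := by
  rw [npow', map_lprod_eq_prod f (by simpa using hn), List.map_replicate, List.prod_replicate]

end ListProduct

section Linearization
open Polynomial
variable {R : Type*} [Ring R]

theorem coeff_zero_pow_C_add_C_mul_X (a w : R) (n : ℕ) :
    ((C a + C w * X) ^ n).coeff 0 = a ^ n := by
  induction n with
  | zero => simp
  | succ n ih => simp [pow_succ, mul_coeff_zero, ih]

theorem natDegree_C_add_C_mul_X_le (a w : R) : (C a + C w * X).natDegree ≤ 1 := by
  compute_degree

theorem coeff_pow_C_add_C_mul_X_self (a w : R) (n : ℕ) :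
    ((C a + C w * X) ^ n).coeff n = w ^ n := by
  simpa using coeff_pow_of_natDegree_le (m := n) (natDegree_C_add_C_mul_X_le a w)

theorem coeff_one_pow_C_add_C_commutator_mul_X (a v : R) (n : ℕ) :
    ((C a + C (a * v - v * a) * X) ^ n).coeff 1 = a ^ n * v - v * a ^ n := by
  induction n with
  | zero => simp [coeff_one]
  | succ n ih =>
    rw [pow_succ, mul_add, ← mul_assoc, coeff_add, coeff_mul_C, coeff_mul_X, coeff_mul_C, ih,
      coeff_zero_pow_C_add_C_mul_X, pow_succ]
    noncomm_ring

theorem add_smul_pow_eq_sum {k : Type*} [CommSemiring k] [Algebra k R] (a w : R) (t : k)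
    (n : ℕ) : (a + t • w) ^ n = ∑ j ∈ range (n + 1), t ^ j • ((C a + C w * X) ^ n).coeff j := by
  have hdeg : ((C a + C w * X) ^ n).natDegree < n + 1 := by
    simpa using natDegree_pow_le_of_le n (natDegree_C_add_C_mul_X_le a w)
  have hP : eval₂ (RingHom.id R) (algebraMap k R t) (C a + C w * X) = a + t • w := by
    simp [eval₂_mul_X, Algebra.smul_def, Algebra.commutes]
  have hpow := map_pow (eval₂RingHom' (RingHom.id R) (algebraMap k R t)
    fun r => (Algebra.commutes t r).symm) (C a + C w * X) n
  simp only [eval₂RingHom', RingHom.coe_mk, MonoidHom.coe_mk, OneHom.coe_mk,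
    eval₂_eq_sum_range' _ hdeg, hP, RingHom.id_apply] at hpow
  rw [← hpow]
  exact sum_congr rfl fun j _ => by rw [Algebra.smul_def, ← map_pow, Algebra.commutes]

end Linearization

section PrimeField
variable {k : Type*} [CommRing k] {p : ℕ} [Fact p.Prime] [CharP k p]

theorem sum_units_castHom_pow (i : ℕ) :
    ∑ t : (ZMod p)ˣ, ZMod.castHom dvd_rfl k t ^ i = if p - 1 ∣ i then -1 else 0 := by
  simp_rw [← map_pow, ← map_sum, FiniteField.sum_pow_units, ZMod.card]
  split_ifs <;> simp

theorem mem_of_forall_sum_pow_smul_mem {V : Type*} [AddCommGroup V] [Module k V]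
    {M : Submodule k V} {c : ℕ → V} (h₀ : c 0 ∈ M) (hₚ : c p ∈ M)
    (h : ∀ t : (ZMod p)ˣ, ∑ j ∈ range (p + 1), ZMod.castHom dvd_rfl k t ^ j • c j ∈ M) :
    c 1 ∈ M := by
  have hsum : ∑ t : (ZMod p)ˣ, ZMod.castHom dvd_rfl k t ^ (p - 2) •
        ∑ j ∈ range (p + 1), ZMod.castHom dvd_rfl k t ^ j • c j =
      ∑ j ∈ range (p + 1), (if p - 1 ∣ p - 2 + j then -1 else 0 : k) • c j := by
    simp_rw [smul_sum, smul_smul, ← pow_add]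
    rw [sum_comm]
    simp_rw [← sum_smul, sum_units_castHom_pow]
  obtain ⟨q, rfl⟩ : ∃ q, p = q + 2 := ⟨p - 2, by have := (Fact.out : p.Prime).two_le; omega⟩
  have hmid : ∀ i ∈ range (q + 1),
      (if q + 2 - 1 ∣ q + 2 - 2 + (i + 1) then -1 else 0 : k) • c (i + 1) =
        if i = 0 then -c 1 else 0 := by
    intro i hi
    have : q + 2 - 1 ∣ q + 2 - 2 + (i + 1) ↔ i = 0 := by
      rw [show q + 2 - 2 + (i + 1) = (q + 2 - 1) + i by omega, Nat.dvd_add_self_left]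
      exact ⟨fun h => Nat.eq_zero_of_dvd_of_lt h (by simpa using hi), fun h => h ▸ dvd_zero _⟩
    rw [if_congr this rfl rfl]
    by_cases hi0 : i = 0 <;> simp [hi0]
  rw [sum_range_succ, sum_range_succ', sum_congr rfl hmid, sum_ite_eq', if_pos (by simp)] at hsum
  rw [← neg_mem_iff, eq_sub_of_add_eq (eq_sub_of_add_eq hsum.symm)]
  exact sub_mem (sub_mem (sum_mem fun t _ => M.smul_mem _ (h t)) (M.smul_mem _ hₚ))
    (M.smul_mem _ h₀)

end PrimeField

theorem pow_mul_sub_mul_pow_mem {k R : Type*} [CommRing k] {p : ℕ} [Fact p.Prime] [CharP k p]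
    [Ring R] [Algebra k R] {M : Submodule k R} {N : NonUnitalSubalgebra k R}
    (hM : ∀ x ∈ N, x ^ p ∈ M) {a v : R} (ha : a ∈ N) (hv : v ∈ N) :
    a ^ p * v - v * a ^ p ∈ M := by
  have hc : a * v - v * a ∈ N := sub_mem (mul_mem ha hv) (mul_mem hv ha)
  rw [← coeff_one_pow_C_add_C_commutator_mul_X]
  refine mem_of_forall_sum_pow_smul_mem ?_ ?_ fun t => ?_
  · rw [coeff_zero_pow_C_add_C_mul_X]
    exact hM a ha
  · rw [coeff_pow_C_add_C_mul_X_self]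
    exact hM _ hc
  · rw [← add_smul_pow_eq_sum]
    exact hM _ (add_mem ha (N.smul_mem _ hc))

theorem npow'_mul_sub_mul_npow'_mem {k A : Type*} [CommRing k] {p : ℕ} [Fact p.Prime]
    [CharP k p] [NonUnitalRing A] [Module k A] [IsScalarTower k A A] [SMulCommClass k A A]
    {M : Submodule k A} (hM : ∀ x, npow' x p ∈ M) (a v : A) :
    npow' a p * v - v * npow' a p ∈ M := by
  let ι := Unitization.inrNonUnitalAlgHom k A
  have hp : p ≠ 0 := (Fact.out : p.Prime).ne_zero
  have hpow : ∀ x ∈ NonUnitalAlgHom.range ι, x ^ p ∈ M.map (Unitization.inrHom k k A) := by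
    intro y hy
    obtain ⟨x, rfl⟩ := (NonUnitalAlgHom.mem_range ι).mp hy
    rw [← map_npow'_eq_pow ι x hp]
    exact Submodule.mem_map_of_mem (hM x)
  obtain ⟨y, hy, hya⟩ := pow_mul_sub_mul_pow_mem hpow
    (NonUnitalAlgHom.mem_range_self ι a) (NonUnitalAlgHom.mem_range_self ι v)
  rw [← map_npow'_eq_pow ι a hp, ← map_mul, ← map_mul, ← map_sub] at hya
  rwa [← Unitization.inr_injective (R := k) hya]

theorem mul_sub_mul_mem_of_mem_span {R A : Type*} [CommRing R] [NonUnitalRing A] [Module R A]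
    [IsScalarTower R A A] [SMulCommClass R A A] {S : Set A} {W : Submodule R A}
    (h : ∀ s ∈ S, ∀ v, s * v - v * s ∈ W) {u : A} (hu : u ∈ Submodule.span R S) (v : A) :
    u * v - v * u ∈ W := by
  have : Submodule.span R S ≤ W.comap (LinearMap.mulRight R v - LinearMap.mulLeft R v) :=
    Submodule.span_le.mpr fun s hs => h s hs v
  exact this hu

section TSpace
variable {k : Type*} [Field k]

theorem subset_TSpan (S : Set (FA k)) : S ⊆ TSpan k S :=
  fun s hs => Submodule.subset_span ⟨NonUnitalAlgHom.id k (FA k), s, hs, rfl⟩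

theorem isTSpace_TSpan (S : Set (FA k)) : IsTSpace k (TSpan k S) := by
  intro φ v hv
  induction hv using Submodule.span_induction with
  | mem a ha =>
    obtain ⟨ψ, s, hs, rfl⟩ := ha
    exact Submodule.subset_span ⟨φ.comp ψ, s, hs, rfl⟩
  | zero => simp
  | add x y _ _ hx hy => simpa using add_mem hx hy
  | smul c x _ hx => simpa using Submodule.smul_mem _ c hx

theorem isTSpace_Hn (p m : ℕ) : IsTSpace k (Hn k p m) := by
  match m with
  | 0 => simp [IsTSpace, Hn]
  | 1 => rw [Hn]; exact isTSpace_TSpan _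
  | n + 2 => rw [Hn]; exact isTSpace_TSpan _

theorem npow'_mem_Hn_one (p : ℕ) (b : FA k) : npow' b p ∈ Hn k p 1 := by
  let φ : FA k →ₙₐ[k] FA k := MonoidAlgebra.liftMagma k (FreeSemigroup.lift fun _ => b)
  have hφ : φ (Xg k 0) = b := by simp [φ, Xg, MonoidAlgebra.liftMagma_apply_apply]
  rw [Hn]
  exact Submodule.subset_span ⟨φ, _, rfl, by rw [map_npow', hφ]⟩

theorem TSpan_mulSet_commutator_mem {U V : Submodule k (FA k)} (hU : IsTSpace k U)
    (hV : IsTSpace k V) (hUc : ∀ u ∈ U, ∀ v, u * v - v * u ∈ U)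
    (hVc : ∀ u ∈ V, ∀ v, u * v - v * u ∈ V) {u : FA k} (hu : u ∈ TSpan k (mulSet U V))
    (v : FA k) : u * v - v * u ∈ TSpan k (mulSet U V) := by
  refine mul_sub_mul_mem_of_mem_span ?_ hu v
  rintro _ ⟨φ, _, ⟨x, hx, y, hy, rfl⟩, rfl⟩ w
  have hφx := hU φ x hx
  have hφy := hV φ y hy
  have leibniz : φ (x * y) * w - w * φ (x * y) =
      (φ x * w - w * φ x) * φ y + φ x * (φ y * w - w * φ y) := by
    rw [map_mul]; noncomm_ring
  rw [leibniz]
  exact add_mem (subset_TSpan _ ⟨_, hUc _ hφx w, _, hφy, rfl⟩)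
    (subset_TSpan _ ⟨_, hφx, _, hVc _ hφy w, rfl⟩)

theorem Hn_one_commutator_mem {p : ℕ} [Fact p.Prime] [CharP k p] {u : FA k}
    (hu : u ∈ Hn k p 1) (v : FA k) : u * v - v * u ∈ Hn k p 1 := by
  rw [Hn] at hu
  refine mul_sub_mul_mem_of_mem_span ?_ hu v
  rintro _ ⟨φ, _, rfl, rfl⟩ w
  rw [map_npow']
  exact npow'_mul_sub_mul_npow'_mem (npow'_mem_Hn_one p) _ w

end TSpace

/-- Each T-space `H_m` is closed under commutators with arbitrary elements. -/
theorem Hm_closed_under_commutator (k : Type*) [Field k] (p : ℕ) (hp : p.Prime)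
    [CharP k p] :
    ∀ m : ℕ, 1 ≤ m → ∀ u ∈ Hn k p m, ∀ v : FA k, u * v - v * u ∈ Hn k p m := by
  have := Fact.mk hp
  intro m hm
  induction m, hm using Nat.le_induction with
  | base => exact fun u hu v => Hn_one_commutator_mem hu v
  | succ m hm ih =>
    obtain ⟨n, rfl⟩ := Nat.exists_eq_add_of_le' hm
    intro u hu v
    rw [Hn] at hu ⊢
    exact TSpan_mulSet_commutator_mem (isTSpace_Hn p _) (isTSpace_Hn p 1) ih
      (fun _ hx => Hn_one_commutator_mem hx) hu v
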